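/- arXiv:2507.05369 — 2 statements merged into one kernel-verified Lean document; each statement's English description precedes it below -/
import Mathlib

section
/- There is no probability distribution p on quadruples (a, b, u, w) ∈ {0,1}⁴ whose four pairwise marginals reproduce the Born-rule predictions of the Hardy state ψ₀ = (1/√3)(|00⟩+|10⟩+|11⟩), namely: for all a,b ∈ {0,1}, the (a,b)-marginal equals |⟨v_a ⊗ v_b, ψ₀⟩|²; for all a,w, the (a,w)-marginal equals |⟨v_a ⊗ e_w, ψ₀⟩|²; for all u,b, the (u,b)-marginal equals |⟨e_u ⊗ v_b, ψ₀⟩|²; and for all u,w, the (u,w)-marginal equals |⟨e_u ⊗ e_w, ψ₀⟩|², where e₀, e₁ is the standard basis of ℂ² and v₀ = |+⟩, v₁ = |−⟩. (This is the mathematical core of Theorem 1: if all four outcomes a, b, u, w of the black-hole protocol coexist on a single spatial slice with quantum-theoretic pairwise statistics, a contradiction follows.) -/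
/-! Hardy's argument. The Hardy state gives probability zero to the outcomes `(a, w) = (1, 0)`,
`(u, b) = (1, 1)` and `(u, w) = (0, 1)`, but probability `1/12` to `(a, b) = (1, 1)`. In a joint
distribution the event `a = b = 1` is covered by the three null events, so it would be null too. -/

open Complex

/-- Standard basis of ℂ²: `ket k` is `|k⟩` (written `e_k`). -/
noncomputable def ket (k : Fin 2) : Fin 2 → ℂ := fun i => if i = k then 1 else 0

/-- The X-basis: `xket 0 = |+⟩ = (|0⟩+|1⟩)/√2`, `xket 1 = |−⟩ = (|0⟩−|1⟩)/√2`
(written `v₀ = |+⟩`, `v₁ = |−⟩`). -/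
noncomputable def xket (k : Fin 2) : Fin 2 → ℂ := fun i =>
  (ket 0 i + (if k = 0 then 1 else -1) * ket 1 i) / (Real.sqrt 2 : ℂ)

/-- The Hardy state `ψ₀ = (1/√3)(|00⟩ + |10⟩ + |11⟩)` on ℂ² ⊗ ℂ². -/
noncomputable def hardyState : Fin 2 × Fin 2 → ℂ := fun p =>
  (ket 0 p.1 * ket 0 p.2 + ket 1 p.1 * ket 0 p.2 + ket 1 p.1 * ket 1 p.2) / (Real.sqrt 3 : ℂ)

/-- Born probability of the product effect `φ ⊗ χ` on the Hardy state. -/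
noncomputable def bornHardy (φ χ : Fin 2 → ℂ) : ℝ :=
  ‖∑ i : Fin 2, ∑ j : Fin 2, (starRingEnd ℂ) (φ i * χ j) * hardyState (i, j)‖ ^ 2

/-- If `a = b = 1` then either `w = 0`, or `w = 1` and then `u = 1` or `u = 0`. -/
theorem hardy_inequality (p : Fin 2 × Fin 2 × Fin 2 × Fin 2 → ℝ) (hp : ∀ s, 0 ≤ p s) :
    ∑ u : Fin 2, ∑ w : Fin 2, p (1, 1, u, w) ≤
      ∑ b : Fin 2, ∑ u : Fin 2, p (1, b, u, 0) + ∑ a : Fin 2, ∑ w : Fin 2, p (a, 1, 1, w) +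
        ∑ a : Fin 2, ∑ b : Fin 2, p (a, b, 0, 1) := by
  simp only [Fin.sum_univ_two]
  linarith [hp (1, 0, 0, 0), hp (1, 0, 1, 0), hp (0, 1, 1, 0), hp (0, 1, 1, 1), hp (1, 1, 1, 0),
    hp (0, 0, 0, 1), hp (0, 1, 0, 1), hp (1, 0, 0, 1)]

lemma bornHardy_eq (φ χ : Fin 2 → ℂ) :
    bornHardy φ χ = ‖φ 0 * χ 0 + φ 1 * χ 0 + φ 1 * χ 1‖ ^ 2 / 3 := by
  have hamp : ∑ i : Fin 2, ∑ j : Fin 2, starRingEnd ℂ (φ i * χ j) * hardyState (i, j)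
      = starRingEnd ℂ (φ 0 * χ 0 + φ 1 * χ 0 + φ 1 * χ 1) / (Real.sqrt 3 : ℂ) := by
    simp only [Fin.sum_univ_two, hardyState, ket, map_add, map_mul]
    norm_num
    ring
  rw [bornHardy, hamp, norm_div, Complex.norm_conj, Complex.norm_real, div_pow,
    Real.norm_of_nonneg (Real.sqrt_nonneg 3), Real.sq_sqrt zero_le_three]

lemma ofReal_sqrt_two_sq : (Real.sqrt 2 : ℂ) ^ 2 = 2 := by
  rw [← Complex.ofReal_pow, Real.sq_sqrt zero_le_two, Complex.ofReal_ofNat]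

lemma bornHardy_xket_one_xket_one : bornHardy (xket 1) (xket 1) = 1 / 12 := by
  have hamp : xket 1 0 * xket 1 0 + xket 1 1 * xket 1 0 + xket 1 1 * xket 1 1 = 1 / 2 := by
    simp only [xket, ket]
    norm_num
    field_simp
    rw [ofReal_sqrt_two_sq]
    norm_num
  rw [bornHardy_eq, hamp]
  norm_num

lemma bornHardy_xket_one_ket_zero : bornHardy (xket 1) (ket 0) = 0 := by
  simp [bornHardy_eq, xket, ket, neg_div]

lemma bornHardy_ket_one_xket_one : bornHardy (ket 1) (xket 1) = 0 := by
  simp [bornHardy_eq, xket, ket, neg_div]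

lemma bornHardy_ket_zero_ket_one : bornHardy (ket 0) (ket 1) = 0 := by
  simp [bornHardy_eq, ket]

/-- There is no probability distribution on quadruples `(a, b, u, w) ∈ {0,1}⁴` whose four
pairwise marginals reproduce the Born-rule predictions of the Hardy state: the `(a,b)`
marginal for `v_a ⊗ v_b`, the `(a,w)` marginal for `v_a ⊗ e_w`, the `(u,b)` marginal for
`e_u ⊗ v_b`, and the `(u,w)` marginal for `e_u ⊗ e_w`. -/
theorem no_joint_distribution_hardy :
    ¬ ∃ p : Fin 2 × Fin 2 × Fin 2 × Fin 2 → ℝ,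
      (∀ s, 0 ≤ p s) ∧
      (∑ s : Fin 2 × Fin 2 × Fin 2 × Fin 2, p s = 1) ∧
      (∀ a b : Fin 2, ∑ u : Fin 2, ∑ w : Fin 2, p (a, b, u, w)
          = bornHardy (xket a) (xket b)) ∧
      (∀ a w : Fin 2, ∑ b : Fin 2, ∑ u : Fin 2, p (a, b, u, w)
          = bornHardy (xket a) (ket w)) ∧
      (∀ u b : Fin 2, ∑ a : Fin 2, ∑ w : Fin 2, p (a, b, u, w)
          = bornHardy (ket u) (xket b)) ∧
      (∀ u w : Fin 2, ∑ a : Fin 2, ∑ b : Fin 2, p (a, b, u, w)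
          = bornHardy (ket u) (ket w)) := by
  rintro ⟨p, hp, -, hab, haw, hub, huw⟩
  have hardy := hardy_inequality p hp
  rw [hab 1 1, haw 1 0, hub 1 1, huw 0 1, bornHardy_xket_one_xket_one,
    bornHardy_xket_one_ket_zero, bornHardy_ket_one_xket_one, bornHardy_ket_zero_ket_one] at hardy
  norm_num at hardy
end

section
/- Core of Theorem 3 (LF black-hole no-go): there is no family of probability distributions p(a, b, u, w, c | x, y) on {0,1}⁵ indexed by settings x, y ∈ {0,1} satisfying all of the following no-signalling and quantum constraints. No-signalling: (NS1) the joint marginal of (u, b, c) at x = 1 is the same for y = 0 and y = 1; (NS2) the joint marginal of (a, b) is the same for all four settings (x, y); (NS3) the joint marginal of (a, w) at y = 1 is the same for x = 0 and x = 1. Quantum constraints (with the outcome label − encoded as 1 for u, w and + as 0 for c): (Q1) p(u = −, b = 0, c = + | x = 1, y = 0) = 0; (Q2) p(a = 0, b = 1 | x = 0, y = 0) = 0; (Q3) p(a = 1, w = − | x = 0, y = 1) = 0; (Q4) p(u = −, w = −, c = + | x = 1, y = 1) > 0. These conditions are jointly contradictory. -/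
/-- Core of the LF black-hole no-go theorem (Theorem 3): there is no family of probability
distributions `p(a,b,u,w,c | x,y)` on `{0,1}⁵` (settings `x, y ∈ {0,1}`; the outcome `−`
for `u, w` is the bit `1` and the outcome `+` for `c` is the bit `0`) satisfying the
no-signalling conditions (NS1)–(NS3) and the quantum constraints (Q1)–(Q4). -/
theorem no_LF_black_hole_model :
    ¬ ∃ p : Fin 2 → Fin 2 → (Fin 2 × Fin 2 × Fin 2 × Fin 2 × Fin 2 → ℝ),
      -- each p(·|x,y) is a probability distribution
      (∀ x y, (∀ s, 0 ≤ p x y s) ∧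
        ∑ s : Fin 2 × Fin 2 × Fin 2 × Fin 2 × Fin 2, p x y s = 1) ∧
      -- (NS1) the (u,b,c)-marginal at x = 1 is independent of y
      (∀ u b c : Fin 2, ∑ a : Fin 2, ∑ w : Fin 2, p 1 0 (a, b, u, w, c)
          = ∑ a : Fin 2, ∑ w : Fin 2, p 1 1 (a, b, u, w, c)) ∧
      -- (NS2) the (a,b)-marginal is the same for all settings
      (∀ a b x y x' y' : Fin 2,
        ∑ u : Fin 2, ∑ w : Fin 2, ∑ c : Fin 2, p x y (a, b, u, w, c)
          = ∑ u : Fin 2, ∑ w : Fin 2, ∑ c : Fin 2, p x' y' (a, b, u, w, c)) ∧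
      -- (NS3) the (a,w)-marginal at y = 1 is independent of x
      (∀ a w : Fin 2, ∑ b : Fin 2, ∑ u : Fin 2, ∑ c : Fin 2, p 0 1 (a, b, u, w, c)
          = ∑ b : Fin 2, ∑ u : Fin 2, ∑ c : Fin 2, p 1 1 (a, b, u, w, c)) ∧
      -- (Q1) p(u = −, b = 0, c = + | x = 1, y = 0) = 0
      (∑ a : Fin 2, ∑ w : Fin 2, p 1 0 (a, 0, 1, w, 0) = 0) ∧
      -- (Q2) p(a = 0, b = 1 | x = 0, y = 0) = 0
      (∑ u : Fin 2, ∑ w : Fin 2, ∑ c : Fin 2, p 0 0 (0, 1, u, w, c) = 0) ∧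
      -- (Q3) p(a = 1, w = − | x = 0, y = 1) = 0
      (∑ b : Fin 2, ∑ u : Fin 2, ∑ c : Fin 2, p 0 1 (1, b, u, 1, c) = 0) ∧
      -- (Q4) p(u = −, w = −, c = + | x = 1, y = 1) > 0
      (0 < ∑ a : Fin 2, ∑ b : Fin 2, p 1 1 (a, b, 1, 1, 0)) := by
  rintro ⟨p, hprob, hNS1, hNS2, hNS3, hQ1, hQ2, hQ3, hQ4⟩
  have h11 := fun s => (hprob 1 1).1 s
  have h10 := fun s => (hprob 1 0).1 s
  have h01 := fun s => (hprob 0 1).1 s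
  have e1 := hNS1 1 0 0
  have e2 := hNS2 0 1 1 1 0 0
  have e3 := hNS3 1 1
  simp only [Fin.sum_univ_two] at e1 e2 e3 hQ1 hQ2 hQ3 hQ4
  linarith [h11 (0,0,1,0,0), h11 (0,0,1,1,0), h11 (1,0,1,0,0), h11 (1,0,1,1,0),
    h11 (1,0,0,1,0), h11 (1,0,0,1,1), h11 (1,0,1,1,1),
    h11 (1,1,0,1,0), h11 (1,1,0,1,1), h11 (1,1,1,1,0), h11 (1,1,1,1,1),
    h11 (0,1,0,0,0), h11 (0,1,0,0,1), h11 (0,1,0,1,0), h11 (0,1,0,1,1),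
    h11 (0,1,1,0,0), h11 (0,1,1,0,1), h11 (0,1,1,1,0), h11 (0,1,1,1,1)]
end
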